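/- Let A(s) be a nonnegative self-adjoint-endomorphism-valued solution of the Riccati equation A′(s) + A(s)² + R(s) = 0 on ℝⁿ with R(s) ≥ 0 self-adjoint, and suppose |R(s)| ≤ C_R and |R′(s)| ≤ C_{R′} for s ∈ [0, 1]. Then there exists a self-adjoint endomorphism A₀ of ℝⁿ with A(0) ≥ A₀ and A₀ ≤ C_R·Id, and a constant ε₀ = ε₀(C_R, C_{R′}) > 0 such that ⟨A₀w, w⟩ ≥ ε₀ ⟨R(0)w, w⟩² for every unit vector w ∈ ℝⁿ. -/

import Mathlib

open Set

noncomputable section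

/-- Euclidean space `ℝⁿ`. -/
abbrev E (n : ℕ) := EuclideanSpace ℝ (Fin n)

/-- A self-adjoint (continuous linear) endomorphism of `ℝⁿ`. -/
def SelfAdj {n : ℕ} (A : E n →L[ℝ] E n) : Prop :=
  ∀ v w : E n, (inner ℝ (A v) w : ℝ) = inner ℝ v (A w)

/-- `A ≤ B` in the sense of quadratic forms. -/
def EndLE {n : ℕ} (A B : E n →L[ℝ] E n) : Prop :=
  ∀ v : E n, (inner ℝ (A v) v : ℝ) ≤ inner ℝ (B v) v

/-!
Along a vector `x`, `a(s) = ⟨A(s)x, x⟩` is nonnegative with `a' = -‖A(s)x‖² - ⟨R(s)x, x⟩`, and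
`‖R'‖ ≤ C'` keeps `⟨R(s)x, x⟩ ≥ r - C' s ‖x‖²` where `r = ⟨R(0)x, x⟩`. So `a` decreases at least
like `r s - C' s² ‖x‖² / 2`, and staying nonnegative up to `s = r / (max C C' ‖x‖²)` forces
`r² ≤ 2 max(C, C') ‖x‖² a(0)`.

`A(0)` itself need not be bounded by `C_R`, so take `A₀ = c A(0) (1 + A(0))⁻¹` with
`c = min 1 C_R`. Writing `w = u + A(0)u`, one has `⟨A₀w, w⟩ = c (⟨A(0)u, u⟩ + ‖A(0)u‖²)`, which is
at most both `c ⟨A(0)w, w⟩` and `c ‖w‖²`, while `⟨R(0)w, w⟩ ≤ 2 ⟨R(0)u, u⟩ + 2 ⟨R(0)A(0)u, A(0)u⟩`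
together with the bound above controls `⟨R(0)w, w⟩²` by `‖w‖²` times it.
-/

open scoped RealInnerProductSpace

lemma mul_sub_sq_le_of_hasDerivAt_le {a a' : ℝ → ℝ} {r C' σ : ℝ}
    (ha : ∀ s ∈ Icc (0 : ℝ) 1, HasDerivAt a (a' s) s)
    (ha' : ∀ s ∈ Icc (0 : ℝ) 1, a' s ≤ C' * s - r) (hσ : σ ∈ Icc (0 : ℝ) 1) (haσ : 0 ≤ a σ) :
    r * σ - C' * σ ^ 2 / 2 ≤ a 0 := by
  set ψ : ℝ → ℝ := fun s ↦ a s + r * s - C' * s ^ 2 / 2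
  have hψ : ∀ s ∈ Icc (0 : ℝ) 1, HasDerivAt ψ (a' s + r - C' * s) s := fun s hs ↦ by
    refine (((ha s hs).add ((hasDerivAt_id s).const_mul r)).sub
      (((hasDerivAt_pow 2 s).const_mul C').div_const 2)).congr_deriv ?_
    norm_num
    ring
  have hanti : AntitoneOn ψ (Icc 0 1) :=
    antitoneOn_of_hasDerivWithinAt_nonpos (convex_Icc 0 1)
      (fun s hs ↦ (hψ s hs).continuousAt.continuousWithinAt)
      (fun s hs ↦ (hψ s (interior_subset hs)).hasDerivWithinAt)
      (fun s hs ↦ by linarith [ha' s (interior_subset hs)])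
  have := hanti ⟨le_rfl, zero_le_one⟩ hσ hσ.1
  simp only [ψ] at this
  linarith

lemma sq_le_of_forall_mul_sub_sq_le {r C C' a : ℝ} (hr : 0 ≤ r) (hrC : r ≤ C)
    (h : ∀ σ ∈ Icc (0 : ℝ) 1, r * σ - C' * σ ^ 2 / 2 ≤ a) : r ^ 2 ≤ 2 * max C C' * a := by
  set M := max C C'
  rcases hr.eq_or_lt with rfl | hr
  · have ha : 0 ≤ a := by simpa using h 0 ⟨le_rfl, zero_le_one⟩
    have hM : 0 ≤ M := hrC.trans (le_max_left _ _)
    simpa using mul_nonneg (mul_nonneg zero_le_two hM) ha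
  have hM : 0 < M := hr.trans_le (hrC.trans (le_max_left _ _))
  -- test the comparison at `σ = r / M`, which lies in `[0, 1]` since `r ≤ M`
  set σ := r / M
  have hσM : σ * M = r := div_mul_cancel₀ r hM.ne'
  have hσ : σ ∈ Icc (0 : ℝ) 1 :=
    ⟨by positivity, div_le_one_of_le₀ (hrC.trans (le_max_left _ _)) hM.le⟩
  have hC'σ : C' * σ ^ 2 ≤ M * σ ^ 2 := mul_le_mul_of_nonneg_right (le_max_right _ _) (sq_nonneg σ)
  have := h σ hσ
  rw [← hσM] at this ⊢
  nlinarith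

variable {F : Type*} [NormedAddCommGroup F] [InnerProductSpace ℝ F]

lemma abs_inner_apply_self_le (T : F →L[ℝ] F) (x : F) : |⟪T x, x⟫| ≤ ‖T‖ * ‖x‖ ^ 2 :=
  calc |⟪T x, x⟫| ≤ ‖T x‖ * ‖x‖ := abs_real_inner_le_norm _ _
    _ ≤ ‖T‖ * ‖x‖ * ‖x‖ := by gcongr; exact T.le_opNorm x
    _ = ‖T‖ * ‖x‖ ^ 2 := by ring

lemma inner_add_apply_add_le {T : F →ₗ[ℝ] F} (hT : T.IsSymmetric) (hpos : ∀ v, 0 ≤ ⟪T v, v⟫)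
    (x y : F) : ⟪T (x + y), x + y⟫ ≤ 2 * (⟪T x, x⟫ + ⟪T y, y⟫) := by
  have := hpos (x - y)
  rw [map_sub, inner_sub_left, inner_sub_right, inner_sub_right] at this
  rw [map_add, inner_add_left, inner_add_right, inner_add_right]
  have hyx : ⟪T y, x⟫ = ⟪T x, y⟫ := by rw [hT, real_inner_comm]
  linarith

lemma hasDerivAt_inner_apply_self {A : ℝ → F →L[ℝ] F} {A' : F →L[ℝ] F} {s : ℝ}
    (h : HasDerivAt A A' s) (x : F) : HasDerivAt (fun t ↦ ⟪A t x, x⟫) ⟪A' x, x⟫ s := by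
  simpa using (h.clm_apply (hasDerivAt_const s x)).inner ℝ (hasDerivAt_const s x)

lemma inner_apply_self_sub_le {R R' : ℝ → F →L[ℝ] F} {C' : ℝ}
    (hR : ∀ s ∈ Icc (0 : ℝ) 1, HasDerivAt R (R' s) s) (hR' : ∀ s ∈ Icc (0 : ℝ) 1, ‖R' s‖ ≤ C')
    {s : ℝ} (hs : s ∈ Icc (0 : ℝ) 1) (x : F) :
    ⟪R 0 x, x⟫ - C' * ‖x‖ ^ 2 * s ≤ ⟪R s x, x⟫ := by
  have hlip : ‖R s - R 0‖ ≤ C' * s := by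
    simpa [abs_of_nonneg hs.1] using Convex.norm_image_sub_le_of_norm_hasDerivWithin_le
      (fun t ht ↦ (hR t ht).hasDerivWithinAt) hR' (convex_Icc 0 1) ⟨le_rfl, zero_le_one⟩ hs
  have := neg_le_of_abs_le ((abs_inner_apply_self_le (R s - R 0) x).trans
    (mul_le_mul_of_nonneg_right hlip (sq_nonneg ‖x‖)))
  rw [sub_apply, inner_sub_left] at this
  linarith

theorem sq_inner_apply_self_le_of_riccati {A R R' : ℝ → F →L[ℝ] F} {C C' : ℝ}
    (hA : ∀ s ∈ Icc (0 : ℝ) 1, HasDerivAt A (-(A s ∘L A s) - R s) s)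
    (hAsymm : ∀ s ∈ Icc (0 : ℝ) 1, (A s : F →ₗ[ℝ] F).IsSymmetric)
    (hApos : ∀ s ∈ Icc (0 : ℝ) 1, ∀ v, 0 ≤ ⟪A s v, v⟫)
    (hR : ∀ s ∈ Icc (0 : ℝ) 1, HasDerivAt R (R' s) s) (hR' : ∀ s ∈ Icc (0 : ℝ) 1, ‖R' s‖ ≤ C')
    (hR0 : ‖R 0‖ ≤ C) (x : F) (hx : 0 ≤ ⟪R 0 x, x⟫) :
    ⟪R 0 x, x⟫ ^ 2 ≤ 2 * max C C' * ‖x‖ ^ 2 * ⟪A 0 x, x⟫ := by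
  have hderiv : ∀ s ∈ Icc (0 : ℝ) 1,
      HasDerivAt (fun t ↦ ⟪A t x, x⟫) (-‖A s x‖ ^ 2 - ⟪R s x, x⟫) s := fun s hs ↦ by
    convert hasDerivAt_inner_apply_self (hA s hs) x using 1
    rw [sub_apply, neg_apply, ContinuousLinearMap.comp_apply, inner_sub_left, inner_neg_left,
      ← real_inner_self_eq_norm_sq]
    have hsymm := hAsymm s hs (A s x) x
    simp only [ContinuousLinearMap.coe_coe] at hsymm
    rw [hsymm]
  have hcomp (σ : ℝ) (hσ : σ ∈ Icc (0 : ℝ) 1) :=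
    mul_sub_sq_le_of_hasDerivAt_le (r := ⟪R 0 x, x⟫) (C' := C' * ‖x‖ ^ 2) hderiv (fun s hs ↦ by
      nlinarith [inner_apply_self_sub_le hR hR' hs x, sq_nonneg ‖A s x‖]) hσ (hApos σ hσ x)
  have hxC : ⟪R 0 x, x⟫ ≤ C * ‖x‖ ^ 2 := (le_abs_self _).trans
    ((abs_inner_apply_self_le (R 0) x).trans (mul_le_mul_of_nonneg_right hR0 (sq_nonneg _)))
  convert sq_le_of_forall_mul_sub_sq_le hx hxC hcomp using 2
  rw [← max_mul_of_nonneg _ _ (sq_nonneg _)]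
  ring

lemma norm_add_apply_self_sq (A : F →L[ℝ] F) (u : F) :
    ‖u + A u‖ ^ 2 = ‖u‖ ^ 2 + 2 * ⟪A u, u⟫ + ‖A u‖ ^ 2 := by
  rw [norm_add_sq_real, real_inner_comm]

-- `Ring.inverse` is `0` off the units; `1 + A` is a unit as soon as `A ≥ 0`.
def mulInvOneAdd (A : F →L[ℝ] F) : F →L[ℝ] F := A * Ring.inverse (1 + A)

section mulInvOneAdd

variable [FiniteDimensional ℝ F] {A : F →L[ℝ] F}

lemma isUnit_one_add (hApos : ∀ v, 0 ≤ ⟪A v, v⟫) : IsUnit (1 + A) := by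
  have hinj : Function.Injective (1 + A : F →ₗ[ℝ] F) := by
    rw [← LinearMap.ker_eq_bot, LinearMap.ker_eq_bot']
    intro v hv
    have h : ⟪v + A v, v⟫ = 0 := by simpa using congrArg (⟪·, v⟫) hv
    rw [inner_add_left, real_inner_self_eq_norm_sq] at h
    have := hApos v
    exact norm_eq_zero.mp (by nlinarith [norm_nonneg v])
  rw [ContinuousLinearMap.isUnit_iff_bijective]
  exact ⟨hinj, LinearMap.injective_iff_surjective.mp hinj⟩

lemma mulInvOneAdd_apply_add_self (hApos : ∀ v, 0 ≤ ⟪A v, v⟫) (u : F) :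
    mulInvOneAdd A (u + A u) = A u := by
  change A ((Ring.inverse (1 + A) * (1 + A)) u) = A u
  rw [Ring.inverse_mul_cancel _ (isUnit_one_add hApos)]
  rfl

lemma exists_add_apply_self_eq (hApos : ∀ v, 0 ≤ ⟪A v, v⟫) (w : F) : ∃ u, u + A u = w :=
  ⟨Ring.inverse (1 + A) w, by
    simpa using congrArg (· w) (Ring.mul_inverse_cancel _ (isUnit_one_add hApos))⟩

lemma inner_mulInvOneAdd_add_self (hApos : ∀ v, 0 ≤ ⟪A v, v⟫) (u : F) :
    ⟪mulInvOneAdd A (u + A u), u + A u⟫ = ⟪A u, u⟫ + ‖A u‖ ^ 2 := by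
  rw [mulInvOneAdd_apply_add_self hApos, inner_add_right, real_inner_self_eq_norm_sq]

lemma mulInvOneAdd_isSymmetric (hAsymm : (A : F →ₗ[ℝ] F).IsSymmetric)
    (hApos : ∀ v, 0 ≤ ⟪A v, v⟫) : (mulInvOneAdd A : F →ₗ[ℝ] F).IsSymmetric := by
  intro v w
  obtain ⟨x, rfl⟩ := exists_add_apply_self_eq hApos v
  obtain ⟨y, rfl⟩ := exists_add_apply_self_eq hApos w
  simp only [ContinuousLinearMap.coe_coe, mulInvOneAdd_apply_add_self hApos, inner_add_left,
    inner_add_right]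
  exact congrArg (· + _) (hAsymm x y)

lemma inner_mulInvOneAdd_nonneg (hApos : ∀ v, 0 ≤ ⟪A v, v⟫) (w : F) :
    0 ≤ ⟪mulInvOneAdd A w, w⟫ := by
  obtain ⟨u, rfl⟩ := exists_add_apply_self_eq hApos w
  rw [inner_mulInvOneAdd_add_self hApos]
  exact add_nonneg (hApos u) (sq_nonneg _)

lemma inner_mulInvOneAdd_le_inner (hAsymm : (A : F →ₗ[ℝ] F).IsSymmetric)
    (hApos : ∀ v, 0 ≤ ⟪A v, v⟫) (w : F) : ⟪mulInvOneAdd A w, w⟫ ≤ ⟪A w, w⟫ := by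
  obtain ⟨u, rfl⟩ := exists_add_apply_self_eq hApos w
  have hAAu : ⟪A (A u), u⟫ = ‖A u‖ ^ 2 := by
    rw [← real_inner_self_eq_norm_sq]; exact hAsymm (A u) u
  rw [inner_mulInvOneAdd_add_self hApos, map_add, inner_add_left, inner_add_right,
    inner_add_right, real_inner_self_eq_norm_sq, hAAu]
  linarith [hApos (A u), sq_nonneg ‖A u‖]

lemma inner_mulInvOneAdd_le_norm_sq (hApos : ∀ v, 0 ≤ ⟪A v, v⟫) (w : F) :
    ⟪mulInvOneAdd A w, w⟫ ≤ ‖w‖ ^ 2 := by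
  obtain ⟨u, rfl⟩ := exists_add_apply_self_eq hApos w
  rw [inner_mulInvOneAdd_add_self hApos, norm_add_apply_self_sq]
  linarith [hApos u, sq_nonneg ‖u‖]

lemma sq_inner_le_inner_mulInvOneAdd (hApos : ∀ v, 0 ≤ ⟪A v, v⟫) {R : F →L[ℝ] F}
    (hRsymm : (R : F →ₗ[ℝ] F).IsSymmetric) (hRpos : ∀ v, 0 ≤ ⟪R v, v⟫) {C K : ℝ} (hK : 0 ≤ K)
    (hRC : ‖R‖ ≤ C) (hRA : ∀ x, ⟪R x, x⟫ ^ 2 ≤ K * ‖x‖ ^ 2 * ⟪A x, x⟫) (w : F) :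
    ⟪R w, w⟫ ^ 2 ≤ 8 * (K + C ^ 2) * ‖w‖ ^ 2 * ⟪mulInvOneAdd A w, w⟫ := by
  obtain ⟨u, rfl⟩ := exists_add_apply_self_eq hApos w
  rw [inner_mulInvOneAdd_add_self hApos]
  have hN := norm_add_apply_self_sq A u
  set N := ‖u + A u‖ ^ 2
  have hN0 : 0 ≤ N := sq_nonneg _
  have hsplit := inner_add_apply_add_le hRsymm hRpos u (A u)
  simp only [ContinuousLinearMap.coe_coe] at hsplit
  have hu : ⟪R u, u⟫ ^ 2 ≤ K * N * ⟪A u, u⟫ := by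
    have : ‖u‖ ^ 2 ≤ N := by nlinarith [hApos u, sq_nonneg ‖A u‖]
    exact (hRA u).trans (mul_le_mul_of_nonneg_right (mul_le_mul_of_nonneg_left this hK) (hApos u))
  have hAu : ⟪R (A u), A u⟫ ^ 2 ≤ C ^ 2 * N * ‖A u‖ ^ 2 := by
    have h1 : ⟪R (A u), A u⟫ ≤ C * ‖A u‖ ^ 2 := (le_abs_self _).trans
      ((abs_inner_apply_self_le R (A u)).trans (by gcongr))
    have h2 : ‖A u‖ ^ 2 ≤ N := by nlinarith [hApos u, sq_nonneg ‖u‖]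
    calc ⟪R (A u), A u⟫ ^ 2 ≤ (C * ‖A u‖ ^ 2) ^ 2 := by gcongr; exact hRpos _
      _ = C ^ 2 * ‖A u‖ ^ 2 * ‖A u‖ ^ 2 := by ring
      _ ≤ C ^ 2 * N * ‖A u‖ ^ 2 := by gcongr
  calc ⟪R (u + A u), u + A u⟫ ^ 2 ≤ (2 * (⟪R u, u⟫ + ⟪R (A u), A u⟫)) ^ 2 :=
        pow_le_pow_left₀ (hRpos _) hsplit 2
    _ ≤ 8 * (⟪R u, u⟫ ^ 2 + ⟪R (A u), A u⟫ ^ 2) := by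
        nlinarith [sq_nonneg (⟪R u, u⟫ - ⟪R (A u), A u⟫)]
    _ ≤ 8 * (K * N * ⟪A u, u⟫ + C ^ 2 * N * ‖A u‖ ^ 2) := by linarith
    _ ≤ 8 * (K + C ^ 2) * N * (⟪A u, u⟫ + ‖A u‖ ^ 2) := by
        nlinarith [mul_nonneg (mul_nonneg hK hN0) (sq_nonneg ‖A u‖),
          mul_nonneg (mul_nonneg (sq_nonneg C) hN0) (hApos u)]

end mulInvOneAdd

/-- **Lemma (Riccati comparison, initial form estimate).** Let `A(s)` be a
nonnegative self-adjoint solution of the Riccati equation `A' + A² + R = 0` on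
`ℝⁿ` with `R(s) ≥ 0` self-adjoint, and assume `|R| ≤ C_R`, `|R'| ≤ C_R'` on
`[0, 1]`. Then there is a self-adjoint `A₀` with `A(0) ≥ A₀`, `A₀ ≤ C_R · Id`,
and a constant `ε₀ = ε₀(C_R, C_R') > 0` with
`⟨A₀ w, w⟩ ≥ ε₀ ⟨R(0) w, w⟩²` for all unit vectors `w`. -/
theorem riccati_initial_form_estimate (C_R C_R' : ℝ) :
    ∃ ε₀ : ℝ, 0 < ε₀ ∧
    ∀ (n : ℕ) (A R R' : ℝ → (E n →L[ℝ] E n)),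
      (∀ s : ℝ, 0 ≤ s → SelfAdj (A s) ∧ SelfAdj (R s)) →
      -- the Riccati equation `A'(s) + A(s)² + R(s) = 0`
      (∀ s : ℝ, 0 ≤ s → HasDerivAt A (-(A s ∘L A s) - R s) s) →
      -- `A(s) ≥ 0` and `R(s) ≥ 0`
      (∀ s : ℝ, 0 ≤ s → ∀ v : E n,
        0 ≤ (inner ℝ (A s v) v : ℝ) ∧ 0 ≤ (inner ℝ (R s v) v : ℝ)) →
      -- `R` differentiable with derivative `R'`, `|R| ≤ C_R`, `|R'| ≤ C_R'` on `[0,1]`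
      (∀ s ∈ Icc (0 : ℝ) 1, HasDerivAt R (R' s) s ∧ ‖R s‖ ≤ C_R ∧ ‖R' s‖ ≤ C_R') →
      ∃ A₀ : E n →L[ℝ] E n, SelfAdj A₀ ∧
        EndLE A₀ (A 0) ∧
        (∀ v : E n, (inner ℝ (A₀ v) v : ℝ) ≤ C_R * ‖v‖ ^ 2) ∧
        (∀ w : E n, ‖w‖ = 1 →
          ε₀ * (inner ℝ (R 0 w) w : ℝ) ^ 2 ≤ (inner ℝ (A₀ w) w : ℝ)) := by
  rcases le_or_gt C_R 0 with hC | hC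
  · -- `‖R 0‖ ≤ C_R ≤ 0` forces `R 0 = 0` and `C_R = 0`, so `A₀ = 0` works
    refine ⟨1, one_pos, fun n A R R' _ _ hpos hR ↦ ?_⟩
    have hR0 := (hR 0 ⟨le_rfl, zero_le_one⟩).2.1
    have hC0 : C_R = 0 := le_antisymm hC ((norm_nonneg _).trans hR0)
    have hR00 : R 0 = 0 := norm_le_zero_iff.mp (hR0.trans hC)
    exact ⟨0, fun _ _ ↦ by simp, fun v ↦ by simpa using (hpos 0 le_rfl v).1,
      fun v ↦ by simp [hC0], fun w _ ↦ by simp [hR00]⟩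
  set K := 2 * max C_R C_R'
  set c := min 1 C_R
  have hK : 0 ≤ K := mul_nonneg zero_le_two (hC.le.trans (le_max_left _ _))
  have hc : 0 < c := lt_min one_pos hC
  refine ⟨c / (8 * (K + C_R ^ 2)), by positivity, fun n A R R' hsa hode hpos hR ↦ ?_⟩
  have hApos (s : ℝ) (hs : s ∈ Icc (0 : ℝ) 1) v := (hpos s hs.1 v).1
  have hR0 : ‖R 0‖ ≤ C_R := (hR 0 ⟨le_rfl, zero_le_one⟩).2.1
  have hRA (x : E n) : ⟪R 0 x, x⟫ ^ 2 ≤ K * ‖x‖ ^ 2 * ⟪A 0 x, x⟫ :=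
    sq_inner_apply_self_le_of_riccati (fun s hs ↦ hode s hs.1) (fun s hs ↦ (hsa s hs.1).1)
      hApos (fun s hs ↦ (hR s hs).1) (fun s hs ↦ (hR s hs).2.2) hR0 x (hpos 0 le_rfl x).2
  have hA0pos := hApos 0 ⟨le_rfl, zero_le_one⟩
  have hB := sq_inner_le_inner_mulInvOneAdd hA0pos (hsa 0 le_rfl).2 (fun v ↦ (hpos 0 le_rfl v).2)
    hK hR0 hRA
  refine ⟨c • mulInvOneAdd (A 0), fun v w ↦ ?_, fun v ↦ ?_, fun v ↦ ?_, fun w hw ↦ ?_⟩ <;>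
    simp only [smul_apply, real_inner_smul_left, real_inner_smul_right]
  · exact congrArg (c * ·) (mulInvOneAdd_isSymmetric (hsa 0 le_rfl).1 hA0pos v w)
  · exact (mul_le_of_le_one_left (inner_mulInvOneAdd_nonneg hA0pos v) (min_le_left _ _)).trans
      (inner_mulInvOneAdd_le_inner (hsa 0 le_rfl).1 hA0pos v)
  · exact mul_le_mul (min_le_right _ _) (inner_mulInvOneAdd_le_norm_sq hA0pos v)
      (inner_mulInvOneAdd_nonneg hA0pos v) hC.le
  · calc c / (8 * (K + C_R ^ 2)) * ⟪R 0 w, w⟫ ^ 2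
        ≤ c / (8 * (K + C_R ^ 2)) * (8 * (K + C_R ^ 2) * ⟪mulInvOneAdd (A 0) w, w⟫) := by
          gcongr
          simpa [hw] using hB w
      _ = c * ⟪mulInvOneAdd (A 0) w, w⟫ := by field_simp
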